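/- arXiv:1901.08313 — 3 statements merged into one kernel-verified Lean document; each statement's English description precedes it below -/
import Mathlib

section
/- For all x, y > 0, one has x^α y^{λ-α} + x^{λ-α} y^α ≤ √(xy) (x^{λ-1} + y^{λ-1}), where λ ∈ (1,2] and α ∈ [max{1/2, λ-1}, λ/2]. -/
/-!
Write `x ^ s = √x * x ^ (s - 1/2)`: after factoring out `√(x y)`, the inequality becomes
`x^a y^b + x^b y^a ≤ x^(a+b) + y^(a+b)` with `a = α - 1/2, b = λ - α - 1/2 ≥ 0`,
which is the rearrangement inequality `(x^a - y^a)(x^b - y^b) ≥ 0` for the similarly ordered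
pairs `(x^a, y^a)` and `(x^b, y^b)`.
-/

open Real

lemma rpow_mul_rpow_add_rpow_mul_rpow_le {x y a b : ℝ} (hx : 0 < x) (hy : 0 < y)
    (ha : 0 ≤ a) (hb : 0 ≤ b) :
    x ^ a * y ^ b + x ^ b * y ^ a ≤ x ^ (a + b) + y ^ (a + b) := by
  have similarly_ordered : 0 ≤ (x ^ a - y ^ a) * (x ^ b - y ^ b) := by
    rcases le_total x y with h | h
    · exact mul_nonneg_of_nonpos_of_nonpos
        (sub_nonpos.mpr (rpow_le_rpow hx.le h ha)) (sub_nonpos.mpr (rpow_le_rpow hx.le h hb))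
    · exact mul_nonneg
        (sub_nonneg.mpr (rpow_le_rpow hy.le h ha)) (sub_nonneg.mpr (rpow_le_rpow hy.le h hb))
  rw [rpow_add hx, rpow_add hy]
  linarith

lemma rpow_mul_rpow_add_rpow_mul_rpow_le_sqrt_mul {x y s t : ℝ} (hx : 0 < x) (hy : 0 < y)
    (hs : 1 / 2 ≤ s) (ht : 1 / 2 ≤ t) :
    x ^ s * y ^ t + x ^ t * y ^ s ≤ √(x * y) * (x ^ (s + t - 1) + y ^ (s + t - 1)) := by
  have split_sqrt : ∀ z : ℝ, 0 < z → ∀ u : ℝ, z ^ u = √z * z ^ (u - 1 / 2) := by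
    intro z hz u
    rw [sqrt_eq_rpow, ← rpow_add hz]
    ring_nf
  rw [split_sqrt x hx s, split_sqrt y hy t, split_sqrt x hx t, split_sqrt y hy s,
    sqrt_mul hx.le, show s + t - 1 = (s - 1 / 2) + (t - 1 / 2) by ring]
  calc √x * x ^ (s - 1 / 2) * (√y * y ^ (t - 1 / 2)) + √x * x ^ (t - 1 / 2) * (√y * y ^ (s - 1 / 2))
      = √x * √y * (x ^ (s - 1 / 2) * y ^ (t - 1 / 2) + x ^ (t - 1 / 2) * y ^ (s - 1 / 2)) := by
        ring
    _ ≤ √x * √y * (x ^ ((s - 1 / 2) + (t - 1 / 2)) + y ^ ((s - 1 / 2) + (t - 1 / 2))) :=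
        mul_le_mul_of_nonneg_left
          (rpow_mul_rpow_add_rpow_mul_rpow_le hx hy (by linarith) (by linarith)) (by positivity)

theorem stmt_2_general (lam alpha : ℝ)
    (halpha1 : max (1/2) (lam - 1) ≤ alpha) (halpha2 : alpha ≤ lam / 2)
    (x y : ℝ) (hx : 0 < x) (hy : 0 < y) :
    x ^ alpha * y ^ (lam - alpha) + x ^ (lam - alpha) * y ^ alpha
      ≤ Real.sqrt (x * y) * (x ^ (lam - 1) + y ^ (lam - 1)) := by
  have half_le_alpha : 1 / 2 ≤ alpha := le_of_max_le_left halpha1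
  have h := rpow_mul_rpow_add_rpow_mul_rpow_le_sqrt_mul (s := alpha) (t := lam - alpha) hx hy
    half_le_alpha (by linarith)
  rwa [show alpha + (lam - alpha) - 1 = lam - 1 by ring] at h

theorem stmt_2 (lam alpha : ℝ) (hlam1 : 1 < lam) (hlam2 : lam ≤ 2)
    (halpha1 : max (1/2) (lam - 1) ≤ alpha) (halpha2 : alpha ≤ lam / 2)
    (x y : ℝ) (hx : 0 < x) (hy : 0 < y) :
    x ^ alpha * y ^ (lam - alpha) + x ^ (lam - alpha) * y ^ alpha
      ≤ Real.sqrt (x * y) * (x ^ (lam - 1) + y ^ (lam - 1)) :=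
  stmt_2_general lam alpha halpha1 halpha2 x y hx hy
end

section
/- For all x, y > 0, one has (x+y)·ln(x+y) ≤ x·ln x + y·ln y + 2·ln 2·√(xy). -/
/-!
For fixed `x`, the defect `x log x + y log y + 2 log 2 √(xy) - (x+y) log(x+y)` vanishes at
`y = x`, and its derivative in `y` is `log 2 · √(x/y) - log (1 + x/y)`. This is nonnegative
for `y ≥ x` because `log (1 + v²) ≤ v log 2` on `[0, 1]`, by convexity of `v ↦ log (1 + v²)`
there. Symmetry reduces to `x ≤ y`.
-/

open Real Set

lemma hasDerivAt_log_one_add_sq (v : ℝ) :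
    HasDerivAt (fun v => log (1 + v ^ 2)) (2 * v / (1 + v ^ 2)) v := by
  simpa using ((hasDerivAt_pow 2 v).const_add 1).log (by positivity)

lemma convexOn_log_one_add_sq : ConvexOn ℝ (Icc 0 1) fun v : ℝ => log (1 + v ^ 2) := by
  have hderiv : deriv (fun v : ℝ => log (1 + v ^ 2)) = fun v => 2 * v / (1 + v ^ 2) :=
    funext fun v => (hasDerivAt_log_one_add_sq v).deriv
  refine MonotoneOn.convexOn_of_deriv (convex_Icc 0 1)
    (fun v _ => (hasDerivAt_log_one_add_sq v).continuousAt.continuousWithinAt)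
    (fun v _ => (hasDerivAt_log_one_add_sq v).differentiableAt.differentiableWithinAt) ?_
  rw [hderiv, interior_Icc]
  intro a ha b hb hab
  -- `2a / (1 + a²) ≤ 2b / (1 + b²)` amounts to `(b - a) (1 - ab) ≥ 0`
  rw [div_le_div_iff₀ (by positivity) (by positivity)]
  nlinarith [mul_nonneg (sub_nonneg.2 hab) (mul_nonneg ha.1.le hb.1.le), ha.2, hb.2,
    mul_le_mul ha.2.le hb.2.le hb.1.le zero_le_one]

lemma log_one_add_sq_le {v : ℝ} (h₀ : 0 ≤ v) (h₁ : v ≤ 1) : log (1 + v ^ 2) ≤ v * log 2 := by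
  have := convexOn_log_one_add_sq.2 (left_mem_Icc.2 zero_le_one) (right_mem_Icc.2 zero_le_one)
    (sub_nonneg.2 h₁) h₀ (sub_add_cancel 1 v)
  norm_num at this
  linarith

lemma log_one_add_le_log_two_mul_sqrt {u : ℝ} (h₀ : 0 ≤ u) (h₁ : u ≤ 1) :
    log (1 + u) ≤ log 2 * √u := by
  have := log_one_add_sq_le (sqrt_nonneg u) (sqrt_le_one.2 h₁)
  rwa [sq_sqrt h₀, mul_comm] at this

noncomputable def mixingDefect (x y : ℝ) : ℝ :=
  x * log x + y * log y + 2 * log 2 * √(x * y) - (x + y) * log (x + y)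

lemma mixingDefect_self {x : ℝ} (hx : 0 < x) : mixingDefect x x = 0 := by
  rw [mixingDefect, sqrt_mul_self hx.le, ← two_mul x, log_mul two_ne_zero hx.ne']
  ring

lemma hasDerivAt_mixingDefect {x y : ℝ} (hx : 0 ≤ x) (hy : 0 < y) :
    HasDerivAt (mixingDefect x) (log 2 * √x / √y + log y - log (x + y)) y := by
  have hxy : x + y ≠ 0 := by positivity
  have hf : mixingDefect x = fun z =>
      x * log x + z * log z + 2 * log 2 * (√x * √z) - (x + z) * log (x + z) := by
    funext z
    rw [mixingDefect, sqrt_mul hx]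
  rw [hf]
  refine ((((hasDerivAt_id y).mul (hasDerivAt_log hy.ne')).const_add (x * log x)).add
    (((hasDerivAt_sqrt hy.ne').const_mul √x).const_mul (2 * log 2))).sub
    (((hasDerivAt_id y).const_add x).mul (((hasDerivAt_id y).const_add x).log hxy))
    |>.congr_deriv ?_
  simp only [id]
  field_simp
  ring

lemma mixingDefect_deriv_nonneg {x y : ℝ} (hx : 0 ≤ x) (hy : 0 < y) (hxy : x ≤ y) :
    0 ≤ log 2 * √x / √y + log y - log (x + y) := by
  have := log_one_add_le_log_two_mul_sqrt (u := x / y) (by positivity) ((div_le_one hy).2 hxy)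
  rw [sqrt_div' _ hy.le] at this
  have : log (x + y) - log y = log (1 + x / y) := by
    rw [← log_div (by positivity) hy.ne', add_div, div_self hy.ne', add_comm]
  linarith [mul_div_assoc (log 2) √x √y]

lemma monotoneOn_mixingDefect {x : ℝ} (hx : 0 < x) : MonotoneOn (mixingDefect x) (Ici x) := by
  refine monotoneOn_of_deriv_nonneg (convex_Ici x)
    (fun y hy => (hasDerivAt_mixingDefect hx.le (hx.trans_le hy)).continuousAt.continuousWithinAt)
    ?_ ?_ <;> rw [interior_Ici]
  · exact fun y hy =>
      (hasDerivAt_mixingDefect hx.le (hx.trans hy)).differentiableAt.differentiableWithinAt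
  · intro y hy
    rw [(hasDerivAt_mixingDefect hx.le (hx.trans hy)).deriv]
    exact mixingDefect_deriv_nonneg hx.le (hx.trans hy) hy.le

theorem stmt_3 (x y : ℝ) (hx : 0 < x) (hy : 0 < y) :
    (x + y) * Real.log (x + y)
      ≤ x * Real.log x + y * Real.log y + 2 * Real.log 2 * Real.sqrt (x * y) := by
  wlog hxy : x ≤ y generalizing x y
  · simpa only [add_comm, mul_comm, add_right_comm] using this y x hy hx (le_of_not_ge hxy)
  have := monotoneOn_mixingDefect hx self_mem_Ici hxy hxy
  rw [mixingDefect_self hx, mixingDefect] at this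
  linarith
end

section
/- Define J₁(r) := ln(1+r) − ln(2)·√r for r > 0. Then J₁(1) = 0, and there exists r₀ > 1 such that J₁ < 0 on (0,1) ∪ (r₀,∞) and J₁ > 0 on (1,r₀). -/
/-!
Substituting `r = s²` turns `J₁` into `s ↦ log (1 + s²) - (log 2) s`, whose derivative
`2s / (1 + s²) - log 2` increases on `[0, 1]` and decreases on `[1, ∞)`. So this function is
strictly convex on `[0, 1]` and strictly concave on `[1, ∞)`, vanishes at `0` and `1`, is positive
at `2` and negative at `10`. Convexity makes it negative on `(0, 1)`; on `[1, ∞)` it has a root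
`s₀ ∈ [2, 10]`, and concavity forces the signs `+` on `(1, s₀)` and `-` beyond `s₀`.
-/

open Real Set

section SignOfConvex

variable {𝕜 β : Type*} [Field 𝕜] [LinearOrder 𝕜] [IsStrictOrderedRing 𝕜]

theorem StrictConvexOn.neg_between_zeros [AddCommMonoid β] [LinearOrder β]
    [IsOrderedAddMonoid β] [Module 𝕜 β] [PosSMulStrictMono 𝕜 β] {s : Set 𝕜} {f : 𝕜 → β}
    (hf : StrictConvexOn 𝕜 s f) {a b x : 𝕜} (ha : a ∈ s) (hb : b ∈ s) (hax : a < x) (hxb : x < b)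
    (hfa : f a = 0) (hfb : f b = 0) : f x < 0 := by
  have hx : x ∈ openSegment 𝕜 a b := by rw [openSegment_eq_Ioo (hax.trans hxb)]; exact ⟨hax, hxb⟩
  simpa [hfa, hfb] using hf.lt_on_openSegment ha hb (hax.trans hxb).ne hx

theorem StrictConcaveOn.pos_between_zeros [AddCommMonoid β] [LinearOrder β]
    [IsOrderedAddMonoid β] [Module 𝕜 β] [PosSMulStrictMono 𝕜 β] {s : Set 𝕜} {f : 𝕜 → β}
    (hf : StrictConcaveOn 𝕜 s f) {a b x : 𝕜} (ha : a ∈ s) (hb : b ∈ s) (hax : a < x) (hxb : x < b)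
    (hfa : f a = 0) (hfb : f b = 0) : 0 < f x := by
  have hx : x ∈ openSegment 𝕜 a b := by rw [openSegment_eq_Ioo (hax.trans hxb)]; exact ⟨hax, hxb⟩
  simpa [hfa, hfb] using hf.lt_on_openSegment ha hb (hax.trans hxb).ne hx

theorem StrictConcaveOn.neg_of_zeros_lt {s : Set 𝕜} {f : 𝕜 → 𝕜} (hf : StrictConcaveOn 𝕜 s f)
    {a b x : 𝕜} (ha : a ∈ s) (hb : b ∈ s) (hx : x ∈ s) (hab : a < b) (hbx : b < x)
    (hfa : f a = 0) (hfb : f b = 0) : f x < 0 := by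
  have hslope := hf.secant_strict_mono ha hb hx hab.ne' (hab.trans hbx).ne' hbx
  rw [hfa, hfb, sub_zero, sub_zero, zero_div] at hslope
  by_contra! hfx
  exact hslope.not_ge (div_nonneg hfx (sub_pos.2 (hab.trans hbx)).le)

end SignOfConvex

theorem strictMonoOn_two_mul_div_one_add_sq :
    StrictMonoOn (fun s : ℝ => 2 * s / (1 + s ^ 2)) (Icc (-1) 1) := by
  intro s ⟨hs, _⟩ t ⟨_, ht⟩ hst
  have hprod : 0 < 1 - s * t := by nlinarith
  rw [div_lt_div_iff₀ (by positivity) (by positivity)]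
  nlinarith [mul_pos (sub_pos.2 hst) hprod]

theorem strictAntiOn_two_mul_div_one_add_sq :
    StrictAntiOn (fun s : ℝ => 2 * s / (1 + s ^ 2)) (Ici 1) := by
  intro s (hs : 1 ≤ s) t _ hst
  have hprod : 0 < s * t - 1 := by nlinarith
  rw [div_lt_div_iff₀ (by positivity) (by positivity)]
  nlinarith [mul_pos (sub_pos.2 hst) hprod]

noncomputable def J₁ (r : ℝ) : ℝ := log (1 + r) - log 2 * √r

noncomputable def J₁Sq (s : ℝ) : ℝ := log (1 + s ^ 2) - log 2 * s

theorem J₁_eq_J₁Sq_sqrt {r : ℝ} (hr : 0 ≤ r) : J₁ r = J₁Sq √r := by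
  rw [J₁, J₁Sq, sq_sqrt hr]

theorem hasDerivAt_J₁Sq (s : ℝ) : HasDerivAt J₁Sq (2 * s / (1 + s ^ 2) - log 2) s := by
  have hsq : HasDerivAt (fun s : ℝ => 1 + s ^ 2) (2 * s) s := by
    simpa using (hasDerivAt_pow 2 s).const_add 1
  have h := (hsq.log (by positivity)).sub ((hasDerivAt_id s).const_mul (log 2))
  rw [mul_one] at h
  exact h

theorem deriv_J₁Sq : deriv J₁Sq = fun s => 2 * s / (1 + s ^ 2) - log 2 :=
  funext fun s => (hasDerivAt_J₁Sq s).deriv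

theorem continuous_J₁Sq : Continuous J₁Sq :=
  continuous_iff_continuousAt.2 fun s => (hasDerivAt_J₁Sq s).continuousAt

theorem strictConvexOn_J₁Sq : StrictConvexOn ℝ (Icc 0 1) J₁Sq := by
  refine StrictMonoOn.strictConvexOn_of_deriv (convex_Icc 0 1) continuous_J₁Sq.continuousOn ?_
  rw [deriv_J₁Sq, interior_Icc]
  exact fun s hs t ht hst => sub_lt_sub_right (strictMonoOn_two_mul_div_one_add_sq
    ⟨by linarith [hs.1], hs.2.le⟩ ⟨by linarith [ht.1], ht.2.le⟩ hst) _

theorem strictConcaveOn_J₁Sq : StrictConcaveOn ℝ (Ici 1) J₁Sq := by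
  refine StrictAntiOn.strictConcaveOn_of_deriv (convex_Ici 1) continuous_J₁Sq.continuousOn ?_
  rw [deriv_J₁Sq, interior_Ici]
  exact fun s hs t ht hst => sub_lt_sub_right
    (strictAntiOn_two_mul_div_one_add_sq (mem_Ici.2 hs.le) (mem_Ici.2 ht.le) hst) _

theorem J₁Sq_zero : J₁Sq 0 = 0 := by simp [J₁Sq]

theorem J₁Sq_one : J₁Sq 1 = 0 := by norm_num [J₁Sq]

theorem J₁Sq_two_pos : 0 < J₁Sq 2 := by
  have h : log 4 < log 5 := log_lt_log (by norm_num) (by norm_num)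
  rw [show (4 : ℝ) = 2 ^ 2 by norm_num, log_pow, Nat.cast_ofNat] at h
  rw [J₁Sq, show (1 : ℝ) + 2 ^ 2 = 5 by norm_num]
  linarith

theorem J₁Sq_ten_neg : J₁Sq 10 < 0 := by
  have h : log 101 < log 1024 := log_lt_log (by norm_num) (by norm_num)
  rw [show (1024 : ℝ) = 2 ^ 10 by norm_num, log_pow, Nat.cast_ofNat] at h
  rw [J₁Sq, show (1 : ℝ) + 10 ^ 2 = 101 by norm_num]
  linarith

theorem exists_one_lt_J₁Sq_eq_zero : ∃ s₀, 1 < s₀ ∧ J₁Sq s₀ = 0 := by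
  obtain ⟨s₀, hs₀, hroot⟩ := intermediate_value_Icc' (by norm_num : (2 : ℝ) ≤ 10)
    continuous_J₁Sq.continuousOn ⟨J₁Sq_ten_neg.le, J₁Sq_two_pos.le⟩
  exact ⟨s₀, by linarith [hs₀.1], hroot⟩

theorem J₁_neg_of_lt_one {r : ℝ} (h0 : 0 < r) (h1 : r < 1) : J₁ r < 0 := by
  rw [J₁_eq_J₁Sq_sqrt h0.le]
  exact strictConvexOn_J₁Sq.neg_between_zeros (left_mem_Icc.2 zero_le_one)
    (right_mem_Icc.2 zero_le_one) (sqrt_pos.2 h0) ((sqrt_lt' one_pos).2 (by simpa using h1))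
    J₁Sq_zero J₁Sq_one

theorem J₁_pos_of_lt_sq {s₀ r : ℝ} (hs₀ : 1 < s₀) (hroot : J₁Sq s₀ = 0) (h1 : 1 < r)
    (hr : r < s₀ ^ 2) : 0 < J₁ r := by
  rw [J₁_eq_J₁Sq_sqrt (by linarith)]
  exact strictConcaveOn_J₁Sq.pos_between_zeros self_mem_Ici (mem_Ici.2 hs₀.le)
    ((lt_sqrt zero_le_one).2 (by simpa using h1)) ((sqrt_lt' (by linarith)).2 hr) J₁Sq_one hroot

theorem J₁_neg_of_sq_lt {s₀ r : ℝ} (hs₀ : 1 < s₀) (hroot : J₁Sq s₀ = 0)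
    (hr : s₀ ^ 2 < r) : J₁ r < 0 := by
  have hs₀r : s₀ < √r := (lt_sqrt (by linarith)).2 hr
  rw [J₁_eq_J₁Sq_sqrt ((sq_nonneg s₀).trans hr.le)]
  exact strictConcaveOn_J₁Sq.neg_of_zeros_lt self_mem_Ici (mem_Ici.2 hs₀.le)
    (mem_Ici.2 (by linarith)) hs₀ hs₀r J₁Sq_one hroot

theorem stmt_13 :
    (Real.log (1 + 1) - Real.log 2 * Real.sqrt 1 = 0) ∧
    ∃ r₀ : ℝ, 1 < r₀ ∧
      (∀ r : ℝ, 0 < r → r < 1 → Real.log (1 + r) - Real.log 2 * Real.sqrt r < 0) ∧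
      (∀ r : ℝ, r₀ < r → Real.log (1 + r) - Real.log 2 * Real.sqrt r < 0) ∧
      (∀ r : ℝ, 1 < r → r < r₀ → 0 < Real.log (1 + r) - Real.log 2 * Real.sqrt r) := by
  obtain ⟨s₀, hs₀, hroot⟩ := exists_one_lt_J₁Sq_eq_zero
  exact ⟨by norm_num, s₀ ^ 2, one_lt_pow₀ hs₀ two_ne_zero, fun _ => J₁_neg_of_lt_one,
    fun _ => J₁_neg_of_sq_lt hs₀ hroot, fun _ => J₁_pos_of_lt_sq hs₀ hroot⟩
end
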